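/- For n ≥ 1 and odd j with 1 ≤ j ≤ g-1, the number g^n + j is complete (the only extreme cycle for the digit set {0, g^n+j} with scale g is the trivial one). -/

import Mathlib

/-- A cycle for the digit set `{0, m}` with scale `g`: integers `x i`, digits `l i ∈ {0, m}`,
satisfying `x (i+1) = (x i + l i) / g` cyclically. -/
def IsCycle (g m : ℕ) (r : ℕ) (x l : ZMod r → ℤ) : Prop :=
  0 < r ∧ (∀ i, l i = 0 ∨ l i = (m : ℤ)) ∧ (∀ i, (g : ℤ) * x (i + 1) = x i + l i)

/-- A non-trivial extreme cycle: a cycle whose digits are not all zero. -/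
def IsNontrivialCycle (g m : ℕ) (r : ℕ) (x l : ZMod r → ℤ) : Prop :=
  IsCycle g m r x l ∧ ∃ i, l i ≠ 0

/-- `m` is incomplete if there exists a non-trivial extreme cycle for `{0, m}`. -/
def Incomplete (g m : ℕ) : Prop :=
  ∃ (r : ℕ) (x l : ZMod r → ℤ), IsNontrivialCycle g m r x l

/-- `m` is complete if the only extreme cycle for `{0, m}` is the trivial one. -/
def Complete (g m : ℕ) : Prop := ¬ Incomplete g m

/-- `m` is primitive if it is incomplete and all proper divisors of `m` are complete. -/
def Primitive (g m : ℕ) : Prop :=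
  Incomplete g m ∧ ∀ d : ℕ, d ∣ m → d ≠ m → Complete g d

/-!
Along a non-trivial cycle the orbit is bounded, `0 < x i` and `(g - 1) * x i ≤ m`, and running the cycle
backwards `s` steps gives `x (i - s) ≡ g ^ s * x i [ZMOD m]`. If `g ^ n ≡ -c [ZMOD m]` this says
`m ∣ x (i - n) + c * x i`. For `c ≤ g - 3` the right-hand side lies strictly between `0` and `m`,
which is absurd. For `c = g - 1` it is forced to equal `m`, so `w i := g * x i - m` satisfies
`w (i - n) = -(g - 1) * w i`; at a maximum of `|w|` this forces `w = 0`, i.e. `g ∣ m`, which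
is impossible since `m ∣ g ^ n + g - 1` with `n ≥ 1`. The two cases cover `m = g ^ n + j`
for odd `j < g` because `g` is even.
-/

theorem ZMod.forall_of_succ_imp {r : ℕ} [NeZero r] {P : ZMod r → Prop}
    (h : ∀ i, P (i + 1) → P i) {i₀ : ZMod r} (h₀ : P i₀) (i : ZMod r) : P i := by
  have key : ∀ k : ℕ, P (i₀ - k) := by
    intro k
    induction k with
    | zero => simpa using h₀
    | succ k ih => exact h _ (by rwa [Nat.cast_succ, sub_add_eq_sub_sub, sub_add_cancel])
  simpa using key (i₀ - i).val

theorem Int.eq_of_dvd_of_pos_of_lt_two_mul {m s : ℤ} (h : m ∣ s) (hs : 0 < s)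
    (hlt : s < 2 * m) : s = m := by
  obtain ⟨k, rfl⟩ := h
  have : 0 < k := by nlinarith
  obtain rfl : k = 1 := by nlinarith
  ring

namespace IsCycle

variable {g m r : ℕ} {x l : ZMod r → ℤ}

theorem neZero (h : IsCycle g m r x l) : NeZero r := ⟨h.1.ne'⟩

theorem digit_nonneg (h : IsCycle g m r x l) (i : ZMod r) : 0 ≤ l i := by
  rcases h.2.1 i with hl | hl <;> simp [hl]

theorem digit_le (h : IsCycle g m r x l) (i : ZMod r) : l i ≤ m := by
  rcases h.2.1 i with hl | hl <;> simp [hl]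

theorem dvd_digit (h : IsCycle g m r x l) (i : ZMod r) : (m : ℤ) ∣ l i := by
  rcases h.2.1 i with hl | hl <;> simp [hl]

theorem mul_succ (h : IsCycle g m r x l) (i : ZMod r) : (g : ℤ) * x (i + 1) = x i + l i :=
  h.2.2 i

theorem sub_one_mul_le (h : IsCycle g m r x l) (hg : 1 ≤ g) (i : ZMod r) :
    ((g : ℤ) - 1) * x i ≤ m := by
  have := h.neZero
  obtain ⟨k, hk⟩ := Finite.exists_max x
  have hstep := h.mul_succ (k - 1)
  rw [sub_add_cancel] at hstep
  calc ((g : ℤ) - 1) * x i ≤ ((g : ℤ) - 1) * x k :=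
        mul_le_mul_of_nonneg_left (hk i) (sub_nonneg.mpr (by exact_mod_cast hg))
    _ = x (k - 1) - x k + l (k - 1) := by linarith
    _ ≤ m := by linarith [hk (k - 1), h.digit_le (k - 1)]

theorem nonneg (h : IsCycle g m r x l) (hg : 2 ≤ g) (i : ZMod r) : 0 ≤ x i := by
  have := h.neZero
  obtain ⟨k, hk⟩ := Finite.exists_min x
  have hstep := h.mul_succ (k - 1)
  rw [sub_add_cancel] at hstep
  have hk_nonneg : 0 ≤ ((g : ℤ) - 1) * x k := by
    linarith [hk (k - 1), h.digit_nonneg (k - 1)]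
  have hg1 : (0 : ℤ) < g - 1 := by
    have : (2 : ℤ) ≤ g := by exact_mod_cast hg
    linarith
  exact (nonneg_of_mul_nonneg_right hk_nonneg hg1).trans (hk i)

theorem eq_zero_of_succ_eq_zero (h : IsCycle g m r x l) (hg : 2 ≤ g) {i : ZMod r}
    (hi : x (i + 1) = 0) : x i = 0 ∧ l i = 0 := by
  have hstep := h.mul_succ i
  rw [hi, mul_zero] at hstep
  have := h.nonneg hg i
  have := h.digit_nonneg i
  constructor <;> linarith

theorem dvd_sub_pow_mul (h : IsCycle g m r x l) (i : ZMod r) (s : ℕ) :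
    (m : ℤ) ∣ x (i - s) - (g : ℤ) ^ s * x i := by
  induction s with
  | zero => simp
  | succ s ih =>
    have hstep := h.mul_succ (i - s - 1)
    rw [sub_add_cancel] at hstep
    rw [Nat.cast_succ, ← sub_sub]
    have key : x (i - s - 1) - (g : ℤ) ^ (s + 1) * x i
        = (g : ℤ) * (x (i - s) - (g : ℤ) ^ s * x i) - l (i - s - 1) := by
      rw [pow_succ]
      linarith
    rw [key]
    exact dvd_sub (ih.mul_left _) (h.dvd_digit _)

theorem dvd_add_mul (h : IsCycle g m r x l) {n : ℕ} {c : ℤ} (hc : (m : ℤ) ∣ (g : ℤ) ^ n + c)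
    (i : ZMod r) : (m : ℤ) ∣ x (i - n) + c * x i := by
  have key : x (i - n) + c * x i = (x (i - n) - (g : ℤ) ^ n * x i) + ((g : ℤ) ^ n + c) * x i := by
    ring
  rw [key]
  exact dvd_add (h.dvd_sub_pow_mul i n) (hc.mul_right _)

end IsCycle

namespace IsNontrivialCycle

variable {g m r : ℕ} {x l : ZMod r → ℤ}

theorem pos (h : IsNontrivialCycle g m r x l) (hg : 2 ≤ g) (i : ZMod r) : 0 < x i := by
  obtain ⟨hc, i₁, hi₁⟩ := h
  have := hc.neZero
  refine (hc.nonneg hg i).lt_of_ne fun hi => hi₁ ?_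
  have hzero : ∀ k, x k = 0 :=
    ZMod.forall_of_succ_imp (fun k hk => (hc.eq_zero_of_succ_eq_zero hg hk).1) hi.symm
  exact (hc.eq_zero_of_succ_eq_zero hg (hzero (i₁ + 1))).2

theorem not_dvd_pow_add (h : IsNontrivialCycle g m r x l) {n c : ℕ} (hc : c + 3 ≤ g) :
    ¬ (m : ℤ) ∣ (g : ℤ) ^ n + c := by
  intro hdvd
  have hg : (c : ℤ) + 3 ≤ g := by exact_mod_cast hc
  have hx0 := h.pos (by omega) 0
  have hxn := h.pos (by omega) (0 - n)
  have hb0 := h.1.sub_one_mul_le (by omega) 0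
  have hbn := h.1.sub_one_mul_le (by omega) (0 - n)
  have hm := Int.le_of_dvd (by positivity) (h.1.dvd_add_mul hdvd 0)
  nlinarith

theorem sum_eq_of_dvd_pow_add_sub_one (h : IsNontrivialCycle g m r x l) (hg : 3 ≤ g) {n : ℕ}
    (hdvd : (m : ℤ) ∣ (g : ℤ) ^ n + (g - 1)) (i : ZMod r) :
    x (i - n) + ((g : ℤ) - 1) * x i = m := by
  have hg' : (3 : ℤ) ≤ g := by exact_mod_cast hg
  have hxi := h.pos (by omega) i
  have hxn := h.pos (by omega) (i - n)
  have hb := h.1.sub_one_mul_le (by omega) i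
  have hbn := h.1.sub_one_mul_le (by omega) (i - n)
  refine Int.eq_of_dvd_of_pos_of_lt_two_mul (h.1.dvd_add_mul hdvd i) (by nlinarith) ?_
  nlinarith

theorem not_dvd_pow_add_sub_one (h : IsNontrivialCycle g m r x l) (hg : 3 ≤ g) {n : ℕ}
    (hn : 1 ≤ n) : ¬ (m : ℤ) ∣ (g : ℤ) ^ n + (g - 1) := by
  intro hdvd
  have := h.1.neZero
  have hg' : (3 : ℤ) ≤ g := by exact_mod_cast hg
  set w : ZMod r → ℤ := fun i => (g : ℤ) * x i - m
  have hw : ∀ i, w (i - n) = -((g : ℤ) - 1) * w i := fun i => by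
    have := h.sum_eq_of_dvd_pow_add_sub_one hg hdvd i
    simp only [w]
    linear_combination (g : ℤ) * this
  obtain ⟨k, hk⟩ := Finite.exists_max fun i => |w i|
  have hwk : w k = 0 := by
    have hmax := hk (k - n)
    simp only [hw, abs_mul, abs_neg, abs_of_pos (by linarith : (0 : ℤ) < g - 1)] at hmax
    have := abs_nonneg (w k)
    exact abs_eq_zero.mp (by nlinarith)
  have hgm : (g : ℤ) ∣ m := ⟨x k, by simp only [w] at hwk; linarith⟩
  have hg1 : (g : ℤ) ∣ 1 := by
    have hg_sub : (g : ℤ) ∣ g - 1 := by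
      simpa using (hgm.trans hdvd).sub (dvd_pow_self (g : ℤ) (by omega : n ≠ 0))
    simpa using (dvd_refl (g : ℤ)).sub hg_sub
  have := Int.le_of_dvd one_pos hg1
  omega

end IsNontrivialCycle

theorem stmt10_general (g n j : ℕ) (hg4 : 4 ≤ g) (hge : Even g)
    (hn : 1 ≤ n) (hj : Odd j) (hj2 : j ≤ g - 1) :
    Complete g (g ^ n + j) := by
  rintro ⟨r, x, l, hcyc⟩
  obtain rfl | hj3 : g = j + 1 ∨ j + 3 ≤ g := by
    obtain ⟨a, rfl⟩ := hge
    obtain ⟨b, rfl⟩ := hj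
    omega
  · exact hcyc.not_dvd_pow_add_sub_one (by omega) hn (by simp)
  · exact hcyc.not_dvd_pow_add (n := n) hj3 (by simp)

theorem stmt10 (g n j : ℕ) (hg4 : 4 ≤ g) (hge : Even g)
    (hn : 1 ≤ n) (hj : Odd j) (hj1 : 1 ≤ j) (hj2 : j ≤ g - 1) :
    Complete g (g ^ n + j) :=
  stmt10_general g n j hg4 hge hn hj hj2
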